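/- Let X be a proper CAT(0) space and suppose a sequence of geodesic lines ℓ_k in X each bounds a flat half-plane, and the ℓ_k converge uniformly on compact sets to a geodesic line ℓ. Then ℓ bounds a flat half-plane; in particular a limit of non-rank-one axes is not rank-one. -/
import Mathlib


/-- The closed Euclidean half-plane, as a subtype of `ℝ²` with the `ℓ²` metric. -/
def HalfPlane : Type := {p : EuclideanSpace ℝ (Fin 2) // 0 ≤ p 1}

noncomputable instance : MetricSpace HalfPlane := by unfold HalfPlane; infer_instance

/-- The boundary point `(t, 0)` of the half-plane. -/
noncomputable def hpBoundary (t : ℝ) : HalfPlane :=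
  ⟨(EuclideanSpace.equiv (Fin 2) ℝ).symm ![t, 0], by simp⟩

/-- A geodesic line `ℓ : ℝ → X` bounds a flat half-plane. -/
def BoundsFlatHalfPlane {X : Type*} [MetricSpace X] (ℓ : ℝ → X) : Prop :=
  ∃ φ : HalfPlane → X, Isometry φ ∧ ∀ t : ℝ, φ (hpBoundary t) = ℓ t

/-- `X` is a CAT(0) space: geodesic (midpoints exist) and the CN comparison inequality. -/
def IsCAT0 (X : Type*) [MetricSpace X] : Prop :=
  (∀ x y : X, ∃ m : X, dist x m = dist x y / 2 ∧ dist m y = dist x y / 2) ∧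
  ∀ x y z m : X, dist y m = dist y z / 2 → dist m z = dist y z / 2 →
    dist x m ^ 2 ≤ (dist x y ^ 2 + dist x z ^ 2) / 2 - dist y z ^ 2 / 4

/-- In a proper CAT(0) space, a locally uniform limit of geodesic lines each bounding a flat
half-plane again bounds a flat half-plane. -/
theorem stmt_10 {X : Type*} [MetricSpace X] [ProperSpace X] (hX : IsCAT0 X)
    (L : ℕ → ℝ → X) (hLgeo : ∀ k, Isometry (L k))
    (hLflat : ∀ k, BoundsFlatHalfPlane (L k))
    (ℓ : ℝ → X) (hℓ : Isometry ℓ)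
    (hconv : ∀ T : ℝ, ∀ ε > (0 : ℝ), ∃ N : ℕ, ∀ k ≥ N, ∀ t : ℝ, |t| ≤ T →
      dist (L k t) (ℓ t) ≤ ε) :
    BoundsFlatHalfPlane ℓ := by
  classical
  choose φ hφiso hφb using hLflat
  haveI : (Filter.atTop : Filter ℕ).NeBot := Filter.atTop_neBot
  set u : Ultrafilter ℕ := Ultrafilter.of Filter.atTop with hu
  have hule : (u : Filter ℕ) ≤ Filter.atTop := Ultrafilter.of_le _
  obtain ⟨N, hN⟩ := hconv 0 1 one_pos
  have key : ∀ p : HalfPlane, ∃ x : X,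
      Filter.Tendsto (fun k => φ k p) u (nhds x) := by
    intro p
    set r : ℝ := dist p (hpBoundary 0) + 1 with hr
    have hK : IsCompact (Metric.closedBall (ℓ 0) r) := isCompact_closedBall _ _
    have hmem : ∀ k ≥ N, φ k p ∈ Metric.closedBall (ℓ 0) r := by
      intro k hk
      have h1 : dist (φ k p) (L k 0) = dist p (hpBoundary 0) := by
        rw [← hφb k 0]; exact (hφiso k).dist_eq _ _
      have h2 := hN k hk 0 (by norm_num)
      have := dist_triangle (φ k p) (L k 0) (ℓ 0)
      simp only [Metric.mem_closedBall, hr]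
      linarith
    have hmem' : (fun k => φ k p) ⁻¹' Metric.closedBall (ℓ 0) r ∈ u :=
      hule (Filter.eventually_atTop.2 ⟨N, hmem⟩)
    obtain ⟨x, _, hx⟩ := hK.ultrafilter_le_nhds (Ultrafilter.map (fun k => φ k p) u)
      (by rwa [Filter.le_principal_iff, Ultrafilter.mem_coe, Ultrafilter.mem_map])
    exact ⟨x, hx⟩
  choose Φ hΦ using key
  refine ⟨Φ, ?_, ?_⟩
  · rw [isometry_iff_dist_eq]
    intro p q
    have h1 : Filter.Tendsto (fun k => dist (φ k p) (φ k q)) u (nhds (dist (Φ p) (Φ q))) :=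
      (hΦ p).dist (hΦ q)
    have h2 : (fun k => dist (φ k p) (φ k q)) = fun _ => dist p q := by
      funext k; exact (hφiso k).dist_eq _ _
    rw [h2] at h1
    exact (tendsto_nhds_unique h1 tendsto_const_nhds :)
  · intro t
    have h1 : Filter.Tendsto (fun k => L k t) Filter.atTop (nhds (ℓ t)) := by
      rw [Metric.tendsto_atTop]
      intro ε hε
      obtain ⟨M, hM⟩ := hconv |t| (ε / 2) (by linarith)
      exact ⟨M, fun k hk => lt_of_le_of_lt (hM k hk t le_rfl) (by linarith)⟩
    have h2 : Filter.Tendsto (fun k => φ k (hpBoundary t)) u (nhds (ℓ t)) := by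
      have : (fun k => φ k (hpBoundary t)) = fun k => L k t := by
        funext k; exact hφb k t
      rw [this]
      exact h1.mono_left hule
    exact tendsto_nhds_unique (hΦ (hpBoundary t)) h2
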